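/- If r is an irreflexive and transitive binary relation on a countable type α, then there exists a function f : α → ℚ such that r a b implies f a < f b. -/

import Mathlib

theorem strictMono_toLinearExtension {α : Type*} [PartialOrder α] :
    StrictMono (toLinearExtension : α →o LinearExtension α) := fun _ _ hab =>
  (toLinearExtension.monotone hab.le).lt_of_ne fun h => hab.ne h

/-- Szpilrajn's linear extension followed by Cantor's back-and-forth embedding. -/
theorem exists_strictMono_of_countable {α β : Type*} [PartialOrder α] [Countable α]
    [LinearOrder β] [DenselyOrdered β] [Nontrivial β] : ∃ f : α → β, StrictMono f := by
  have : Countable (LinearExtension α) := ‹Countable α›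
  obtain ⟨e⟩ := Order.embedding_from_countable_to_dense (LinearExtension α) β
  exact ⟨e ∘ toLinearExtension, e.strictMono.comp strictMono_toLinearExtension⟩

theorem countable_strict_order_embeds_rat {α : Type*} [Countable α]
    (r : α → α → Prop) (hirr : ∀ a, ¬ r a a)
    (htrans : ∀ a b c, r a b → r b c → r a c) :
    ∃ f : α → ℚ, ∀ a b, r a b → f a < f b := by
  have : IsStrictOrder α r := { irrefl := hirr, trans := htrans }
  let _ := partialOrderOfSO r
  obtain ⟨f, hf⟩ := exists_strictMono_of_countable (α := α) (β := ℚ)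
  -- the strict order of `partialOrderOfSO r` is `r` itself, definitionally
  exact ⟨f, fun _ _ hab => hf hab⟩
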